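/- For ν > 0 and a locally integrable function f : (0,∞) → ℝ of exponential order (i.e. |f(t)| ≤ M e^{at} for some constants M, a), the Laplace transform of the Riemann–Liouville fractional integral satisfies L{(I^ν f)(t)}(p) = p^{-ν} L{f}(p) for all real p > max(a, 0). -/

import Mathlib

open Real MeasureTheory

/-- The k-Gamma function (via its closed form `Γ_k(x) = k^(x/k-1) Γ(x/k)`). -/
noncomputable def kGamma (k x : ℝ) : ℝ := k ^ (x / k - 1) * Real.Gamma (x / k)

/-- The k-Struve function. -/
noncomputable def kStruve (k ν c x : ℝ) : ℝ :=
  ∑' r : ℕ, (-c) ^ r / (kGamma k ((r : ℝ) * k + ν + 3 * k / 2) * Real.Gamma ((r : ℝ) + 3 / 2)) *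
    (x / 2) ^ (2 * (r : ℝ) + ν / k + 1)

/-- The classical Struve function. -/
noncomputable def struveH (p x : ℝ) : ℝ :=
  ∑' n : ℕ, (-1) ^ n / (Real.Gamma ((n : ℝ) + 3 / 2) * Real.Gamma ((n : ℝ) + p + 3 / 2)) *
    (x / 2) ^ (2 * (n : ℝ) + p + 1)

/-- The Riemann–Liouville fractional integral of order ν. -/
noncomputable def RL (ν : ℝ) (f : ℝ → ℝ) (t : ℝ) : ℝ :=
  (1 / Real.Gamma ν) * ∫ s in (0 : ℝ)..t, (t - s) ^ (ν - 1) * f s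

/-- The Laplace transform. -/
noncomputable def laplace (f : ℝ → ℝ) (p : ℝ) : ℝ :=
  ∫ t in Set.Ioi (0 : ℝ), Real.exp (-(p * t)) * f t

/-- The real two-parameter Mittag-Leffler function. -/
noncomputable def MLE (α β x : ℝ) : ℝ := ∑' n : ℕ, x ^ n / Real.Gamma (α * (n : ℝ) + β)

/-!
Multiplying `(I^ν g)(t)` by `e^{-pt}` writes it as the `s`-integral of the kernel
`K(t, s) = 1_{s < t} e^{-pt} (t - s)^{ν-1} g(s)` (up to `1 / Γ(ν)`). Integrating `K` in `t`
instead, the shift `t = s + u` turns the inner integral into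
`e^{-ps} g(s) ∫_0^∞ u^{ν-1} e^{-pu} du = p^{-ν} Γ(ν) e^{-ps} g(s)`. The same computation for `|g|`
shows that `K` is integrable on the quadrant as soon as `e^{-pt} g(t)` is integrable, which the
exponential bound gives for `p > a`, so Fubini's theorem applies.
-/

open Set

section Shift

variable {E : Type*} [NormedAddCommGroup E]

lemma integrableOn_Ioi_iff_comp_add_right {h : ℝ → E} (s : ℝ) :
    IntegrableOn h (Ioi s) ↔ IntegrableOn (fun u => h (u + s)) (Ioi 0) := by
  have hpre : (· + s) ⁻¹' Ioi s = Ioi (0 : ℝ) := by ext u; simp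
  rw [← (measurePreserving_add_right volume s).integrableOn_comp_preimage
    (measurableEmbedding_addRight s), hpre]
  rfl

lemma setIntegral_Ioi_eq_comp_add_right [NormedSpace ℝ E] (h : ℝ → E) (s : ℝ) :
    ∫ t in Ioi s, h t = ∫ u in Ioi 0, h (u + s) := by
  have hpre : (· + s) ⁻¹' Ioi s = Ioi (0 : ℝ) := by ext u; simp
  rw [← (measurePreserving_add_right volume s).setIntegral_preimage_emb
    (measurableEmbedding_addRight s), hpre]

end Shift

section Tail

variable {ν p : ℝ}

lemma exp_neg_mul_mul_sub_rpow_comp_add_right (s u : ℝ) :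
    exp (-(p * (u + s))) * (u + s - s) ^ (ν - 1)
      = exp (-(p * s)) * (u ^ (ν - 1) * exp (-(p * u))) := by
  rw [add_sub_cancel_right, mul_add, neg_add, exp_add]
  ring

lemma integrableOn_Ioi_exp_neg_mul_mul_sub_rpow (hν : 0 < ν) (hp : 0 < p) (s : ℝ) :
    IntegrableOn (fun t => exp (-(p * t)) * (t - s) ^ (ν - 1)) (Ioi s) := by
  rw [integrableOn_Ioi_iff_comp_add_right]
  simp only [exp_neg_mul_mul_sub_rpow_comp_add_right]
  have h := integrableOn_rpow_mul_exp_neg_mul_rpow (by linarith : -1 < ν - 1) one_pos hp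
  simp only [rpow_one, neg_mul] at h
  exact h.const_mul _

lemma integral_Ioi_exp_neg_mul_mul_sub_rpow (hν : 0 < ν) (hp : 0 < p) (s : ℝ) :
    ∫ t in Ioi s, exp (-(p * t)) * (t - s) ^ (ν - 1)
      = p ^ (-ν) * Gamma ν * exp (-(p * s)) := by
  simp only [setIntegral_Ioi_eq_comp_add_right _ s, exp_neg_mul_mul_sub_rpow_comp_add_right,
    integral_const_mul, integral_rpow_mul_exp_neg_mul_Ioi hν hp, one_div, inv_rpow hp.le,
    rpow_neg hp.le]
  ring

end Tail

section Kernel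

variable (ν p : ℝ) (g : ℝ → ℝ)

noncomputable def laplaceRLKernel : ℝ × ℝ → ℝ :=
  {q : ℝ × ℝ | q.2 < q.1}.indicator fun q => exp (-(p * q.1)) * (q.1 - q.2) ^ (ν - 1) * g q.2

lemma laplaceRLKernel_section_fst (s : ℝ) :
    (fun t => laplaceRLKernel ν p g (t, s))
      = (Ioi s).indicator fun t => exp (-(p * t)) * (t - s) ^ (ν - 1) * g s :=
  rfl

lemma laplaceRLKernel_section_snd (t : ℝ) :
    (fun s => laplaceRLKernel ν p g (t, s))
      = (Iio t).indicator fun s => exp (-(p * t)) * (t - s) ^ (ν - 1) * g s :=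
  rfl

lemma norm_laplaceRLKernel (q : ℝ × ℝ) :
    ‖laplaceRLKernel ν p g q‖ = laplaceRLKernel ν p (fun s => |g s|) q := by
  by_cases h : q.2 < q.1
  · have hts : 0 ≤ q.1 - q.2 := by linarith
    simp [laplaceRLKernel, h, abs_of_nonneg (rpow_nonneg hts _)]
  · simp [laplaceRLKernel, h]

lemma mul_RL_eq_setIntegral_laplaceRLKernel {t : ℝ} (ht : 0 < t) :
    exp (-(p * t)) * RL ν g t = 1 / Gamma ν * ∫ s in Ioi 0, laplaceRLKernel ν p g (t, s) := by
  rw [laplaceRLKernel_section_snd, integral_indicator measurableSet_Iio,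
    Measure.restrict_restrict measurableSet_Iio, Iio_inter_Ioi, ← integral_Ioc_eq_integral_Ioo,
    ← intervalIntegral.integral_of_le ht.le, RL]
  simp only [mul_assoc, intervalIntegral.integral_const_mul]
  ring

variable {ν p}

lemma setIntegral_laplaceRLKernel_eq (hν : 0 < ν) (hp : 0 < p) {s : ℝ} (hs : 0 ≤ s) :
    ∫ t in Ioi 0, laplaceRLKernel ν p g (t, s) = p ^ (-ν) * Gamma ν * (exp (-(p * s)) * g s) := by
  rw [laplaceRLKernel_section_fst, integral_indicator measurableSet_Ioi,
    Measure.restrict_restrict measurableSet_Ioi, inter_eq_left.2 (Ioi_subset_Ioi hs),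
    integral_mul_const, integral_Ioi_exp_neg_mul_mul_sub_rpow hν hp]
  ring

lemma integrableOn_laplaceRLKernel_section_fst (hν : 0 < ν) (hp : 0 < p) (s : ℝ) :
    IntegrableOn (fun t => laplaceRLKernel ν p g (t, s)) (Ioi 0) := by
  rw [laplaceRLKernel_section_fst]
  exact ((integrable_indicator_iff measurableSet_Ioi).2
    ((integrableOn_Ioi_exp_neg_mul_mul_sub_rpow hν hp s).mul_const (g s))).integrableOn

lemma integrable_laplaceRLKernel (hν : 0 < ν) (hp : 0 < p)
    (hg : IntegrableOn (fun t => exp (-(p * t)) * g t) (Ioi 0)) :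
    Integrable (laplaceRLKernel ν p g)
      ((volume.restrict (Ioi 0)).prod (volume.restrict (Ioi 0))) := by
  have hg_meas : AEStronglyMeasurable g (volume.restrict (Ioi 0)) := by
    refine ((continuous_exp.comp (continuous_const_mul p)).aestronglyMeasurable.mul
      hg.aestronglyMeasurable).congr (ae_of_all _ fun t => ?_)
    simp [← mul_assoc, ← exp_add]
  have hK_meas : AEStronglyMeasurable (laplaceRLKernel ν p g)
      ((volume.restrict (Ioi 0)).prod (volume.restrict (Ioi 0))) := by
    refine AEStronglyMeasurable.indicator ?_ (measurableSet_lt measurable_snd measurable_fst)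
    exact (by fun_prop : Measurable fun q : ℝ × ℝ => exp (-(p * q.1)) * (q.1 - q.2) ^ (ν - 1))
      |>.aestronglyMeasurable.mul hg_meas.comp_snd
  refine (integrable_prod_iff' hK_meas).2
    ⟨ae_of_all _ (integrableOn_laplaceRLKernel_section_fst g hν hp), ?_⟩
  refine (hg.norm.const_mul (p ^ (-ν) * Gamma ν)).congr ?_
  filter_upwards [ae_restrict_mem measurableSet_Ioi] with s hs
  simp only [norm_laplaceRLKernel, setIntegral_laplaceRLKernel_eq _ hν hp hs.le]
  simp only [norm_mul, Real.norm_eq_abs, abs_of_pos (exp_pos _)]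

end Kernel

lemma integrableOn_exp_neg_mul_mul_of_abs_le {f : ℝ → ℝ} {M a p : ℝ}
    (hf : AEStronglyMeasurable f (volume.restrict (Ioi 0)))
    (hbound : ∀ t > (0 : ℝ), |f t| ≤ M * exp (a * t)) (hpa : a < p) :
    IntegrableOn (fun t => exp (-(p * t)) * f t) (Ioi 0) := by
  refine ((exp_neg_integrableOn_Ioi 0 (sub_pos.2 hpa)).const_mul M).mono'
    ((continuous_exp.comp (continuous_const_mul p).neg).aestronglyMeasurable.mul hf) ?_
  filter_upwards [ae_restrict_mem measurableSet_Ioi] with t ht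
  calc ‖exp (-(p * t)) * f t‖ = exp (-(p * t)) * |f t| := by
        rw [norm_mul, Real.norm_of_nonneg (exp_pos _).le, Real.norm_eq_abs]
    _ ≤ exp (-(p * t)) * (M * exp (a * t)) := by gcongr; exact hbound t ht
    _ = M * exp (-(p - a) * t) := by rw [mul_left_comm, ← exp_add]; ring_nf

theorem laplace_RL_of_integrableOn {ν p : ℝ} {g : ℝ → ℝ} (hν : 0 < ν) (hp : 0 < p)
    (hg : IntegrableOn (fun t => exp (-(p * t)) * g t) (Ioi 0)) :
    laplace (RL ν g) p = p ^ (-ν) * laplace g p := by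
  have hΓ : Gamma ν ≠ 0 := (Gamma_pos_of_pos hν).ne'
  calc laplace (RL ν g) p
      = 1 / Gamma ν * ∫ t in Ioi 0, ∫ s in Ioi 0, laplaceRLKernel ν p g (t, s) := by
        rw [laplace, setIntegral_congr_fun measurableSet_Ioi
          fun t ht => mul_RL_eq_setIntegral_laplaceRLKernel ν p g ht, integral_const_mul]
    _ = 1 / Gamma ν * ∫ s in Ioi 0, ∫ t in Ioi 0, laplaceRLKernel ν p g (t, s) := by
        rw [integral_integral_swap (f := fun t s => laplaceRLKernel ν p g (t, s))
          (integrable_laplaceRLKernel g hν hp hg)]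
    _ = 1 / Gamma ν * ∫ s in Ioi 0, p ^ (-ν) * Gamma ν * (exp (-(p * s)) * g s) := by
        rw [setIntegral_congr_fun measurableSet_Ioi
          fun s hs => setIntegral_laplaceRLKernel_eq g hν hp hs.le]
    _ = p ^ (-ν) * laplace g p := by
        rw [integral_const_mul, laplace]
        field_simp

theorem laplace_RL (ν : ℝ) (hν : 0 < ν) (f : ℝ → ℝ)
    (hloc : LocallyIntegrableOn f (Set.Ioi 0))
    (M a : ℝ) (hbound : ∀ t > (0 : ℝ), |f t| ≤ M * Real.exp (a * t))
    (p : ℝ) (hp : max a 0 < p) :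
    laplace (RL ν f) p = p ^ (-ν) * laplace f p :=
  laplace_RL_of_integrableOn hν ((le_max_right a 0).trans_lt hp)
    (integrableOn_exp_neg_mul_mul_of_abs_le hloc.aestronglyMeasurable hbound
      ((le_max_left a 0).trans_lt hp))
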